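/- If A' ∈ ASM(n−k) sits as the top-left (n−k)×(n−k) block of A ∈ ASM(n), then A = A' ⊕ B for some B ∈ ASM(k); that is, the off-diagonal blocks of A are zero and the bottom-right k×k block is itself an ASM. -/

import Mathlib

/-!
Along any row or column of an ASM the nonzero entries alternate and start with `+1`, so all
prefix sums lie in `{0, 1}`. Take an entry of the top-right block all of whose predecessors in
that block (in its row and its column) vanish. Above it, its column sums to `0`, so the entry is
`≥ 0`; to its left, its row sums to `1` (the row sum of `A'`), so the entry is `≤ 0`. Induction
on `i + j` clears the top-right block, the same argument for `Aᵀ` clears the bottom-left one, and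
the bottom-right block inherits the ASM conditions from `A`.
-/

/-- An alternating sign matrix: entries in `{-1,0,1}`, each row and column sums
to `1`, and consecutive nonzero entries along any row or column have opposite
signs (i.e. nonzero entries alternate between `1` and `-1`). -/
def IsASM {n : ℕ} (A : Matrix (Fin n) (Fin n) ℤ) : Prop :=
  (∀ i j, A i j = -1 ∨ A i j = 0 ∨ A i j = 1) ∧
  (∀ i, ∑ j, A i j = 1) ∧
  (∀ j, ∑ i, A i j = 1) ∧
  (∀ i : Fin n, ∀ j₁ j₂ : Fin n, j₁ < j₂ → A i j₁ ≠ 0 → A i j₂ ≠ 0 →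
    (∀ j, j₁ < j → j < j₂ → A i j = 0) → A i j₂ = -A i j₁) ∧
  (∀ j : Fin n, ∀ i₁ i₂ : Fin n, i₁ < i₂ → A i₁ j ≠ 0 → A i₂ j ≠ 0 →
    (∀ i, i₁ < i → i < i₂ → A i j = 0) → A i₂ j = -A i₁ j)

/-- The rank function `rk_A(i,j) = ∑_{a ≤ i} ∑_{b ≤ j} A_{a,b}` (1-based indices,
so `rk A i j` sums the entries in the first `i` rows and first `j` columns). -/
def rk {n : ℕ} (A : Matrix (Fin n) (Fin n) ℤ) (i j : ℕ) : ℤ :=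
  ∑ a : Fin n, ∑ b : Fin n, if (a : ℕ) < i ∧ (b : ℕ) < j then A a b else 0

/-- The block-diagonal direct sum of an `m × m` matrix and a `k × k` matrix. -/
def directSum {m k : ℕ} (A : Matrix (Fin m) (Fin m) ℤ) (B : Matrix (Fin k) (Fin k) ℤ) :
    Matrix (Fin (m + k)) (Fin (m + k)) ℤ :=
  Matrix.reindex finSumFinEquiv finSumFinEquiv (Matrix.fromBlocks A 0 0 B)

open Finset
open scoped Matrix

def SignsAlternate {α : Type*} [Preorder α] (v : α → ℤ) : Prop :=
  ∀ a b, a < b → v a ≠ 0 → v b ≠ 0 → (∀ c, a < c → c < b → v c = 0) → v b = -v a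

theorem SignsAlternate.comp {α β : Type*} [LinearOrder α] [Preorder β] {v : β → ℤ}
    (hv : SignsAlternate v) {f : α → β} (hf : StrictMono f) (hconn : (Set.range f).OrdConnected) :
    SignsAlternate (v ∘ f) := by
  intro a b hab ha hb hzero
  refine hv (f a) (f b) (hf hab) ha hb fun c hac hcb => ?_
  obtain ⟨d, rfl⟩ := hconn.out (Set.mem_range_self a) (Set.mem_range_self b) ⟨hac.le, hcb.le⟩
  exact hzero d (hf.lt_iff_lt.mp hac) (hf.lt_iff_lt.mp hcb)

theorem SignsAlternate.comp_natAdd {m k : ℕ} {v : Fin (m + k) → ℤ} (hv : SignsAlternate v) :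
    SignsAlternate (v ∘ Fin.natAdd m) :=
  hv.comp (Fin.strictMono_natAdd m) ⟨by
    rintro - ⟨a, rfl⟩ - - c ⟨hac, -⟩
    rw [Fin.le_def, Fin.val_natAdd] at hac
    exact ⟨⟨c - m, by omega⟩, Fin.ext (show m + (c - m : ℕ) = c by omega)⟩⟩

theorem SignsAlternate.comp_add_left {g : ℕ → ℤ} (hg : SignsAlternate g) (j : ℕ) :
    SignsAlternate fun c => g (j + c) :=
  hg.comp (f := (j + ·)) (strictMono_id.const_add j) ⟨by
    rintro - ⟨a, rfl⟩ - - c ⟨hac, -⟩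
    exact ⟨c - j, show j + (c - j) = c by have : j + a ≤ c := hac; omega⟩⟩

theorem SignsAlternate.sum_range_le_one {g : ℕ → ℤ} (hval : ∀ c, g c = -1 ∨ g c = 0 ∨ g c = 1)
    (hg : SignsAlternate g) (j : ℕ) : ∑ c ∈ range j, g c ≤ 1 := by
  -- a prefix sum equal to `1` has a `+1` as its last nonzero term, so the next one is a `-1`
  suffices ∀ j, ∑ c ∈ range j, g c ≤ 1 ∧
      (∑ c ∈ range j, g c = 1 → ∃ b < j, g b = 1 ∧ ∀ c, b < c → c < j → g c = 0) from (this j).1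
  intro j
  induction j with
  | zero => simp
  | succ j ih =>
    obtain ⟨hle, hlast⟩ := ih
    rw [sum_range_succ]
    rcases hval j with hj | hj | hj
    · exact ⟨by omega, fun h => by omega⟩
    · refine ⟨by omega, fun h => ?_⟩
      obtain ⟨b, hb, hgb, hzero⟩ := hlast (by omega)
      refine ⟨b, by omega, hgb, fun c hbc hcj => ?_⟩
      rcases Nat.lt_succ_iff_lt_or_eq.mp hcj with hcj | rfl
      exacts [hzero c hbc hcj, hj]
    · have hprev : ∑ c ∈ range j, g c ≠ 1 := fun h => by
        obtain ⟨b, hb, hgb, hzero⟩ := hlast h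
        have := hg b j hb (by omega) (by omega) hzero
        omega
      exact ⟨by omega, fun _ => ⟨j, by omega, hj, fun c hjc hcj => by omega⟩⟩

theorem SignsAlternate.sum_range_nonneg {g : ℕ → ℤ} (hval : ∀ c, g c = -1 ∨ g c = 0 ∨ g c = 1)
    (hg : SignsAlternate g) {N j : ℕ} (hN : ∑ c ∈ range N, g c = 1) (hj : j ≤ N) :
    0 ≤ ∑ c ∈ range j, g c := by
  have hsplit := sum_range_add g j (N - j)
  rw [Nat.add_sub_cancel' hj, hN] at hsplit
  have := (hg.comp_add_left j).sum_range_le_one (fun c => hval (j + c)) (N - j)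
  linarith

def extendByZero {n : ℕ} (v : Fin n → ℤ) (c : ℕ) : ℤ :=
  if h : c < n then v ⟨c, h⟩ else 0

theorem extendByZero_val {n : ℕ} (v : Fin n → ℤ) (b : Fin n) : extendByZero v b = v b :=
  dif_pos b.isLt

theorem sum_range_extendByZero {n : ℕ} (v : Fin n → ℤ) :
    ∑ c ∈ range n, extendByZero v c = ∑ b, v b := by
  rw [← Fin.sum_univ_eq_sum_range]
  exact sum_congr rfl fun b _ => extendByZero_val v b

theorem sum_range_extendByZero_castAdd {m k : ℕ} (v : Fin (m + k) → ℤ) :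
    ∑ c ∈ range m, extendByZero v c = ∑ b : Fin m, v (Fin.castAdd k b) := by
  rw [← Fin.sum_univ_eq_sum_range]
  exact sum_congr rfl fun b _ => extendByZero_val v (Fin.castAdd k b)

theorem extendByZero_eq_neg_one_or_zero_or_one {n : ℕ} {v : Fin n → ℤ}
    (hv : ∀ b, v b = -1 ∨ v b = 0 ∨ v b = 1) (c : ℕ) :
    extendByZero v c = -1 ∨ extendByZero v c = 0 ∨ extendByZero v c = 1 := by
  unfold extendByZero
  split_ifs
  exacts [hv _, Or.inr (Or.inl rfl)]

theorem SignsAlternate.extendByZero {n : ℕ} {v : Fin n → ℤ} (hv : SignsAlternate v) :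
    SignsAlternate (extendByZero v) := by
  intro a b hab ha hb hzero
  have hb' : b < n := by by_contra h; simp [_root_.extendByZero, h] at hb
  have ha' : a < n := hab.trans hb'
  simp only [_root_.extendByZero, dif_pos ha', dif_pos hb'] at ha hb ⊢
  refine hv ⟨a, ha'⟩ ⟨b, hb'⟩ hab ha hb fun c hac hcb => ?_
  simpa [extendByZero_val] using hzero c hac hcb

namespace IsASM

section

variable {n : ℕ} {A : Matrix (Fin n) (Fin n) ℤ}

theorem transpose (hA : IsASM A) : IsASM Aᵀ :=
  let ⟨hval, hrow, hcol, hralt, hcalt⟩ := hA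
  ⟨fun i j => hval j i, hcol, hrow, hcalt, hralt⟩

theorem signsAlternate_row (hA : IsASM A) (i : Fin n) : SignsAlternate (A i) :=
  hA.2.2.2.1 i

theorem nonpos_of_sum_range_row_eq_one (hA : IsASM A) {i j : Fin n}
    (h : ∑ c ∈ range j, extendByZero (A i) c = 1) : A i j ≤ 0 := by
  have := (hA.signsAlternate_row i).extendByZero.sum_range_le_one
    (extendByZero_eq_neg_one_or_zero_or_one (hA.1 i)) (j + 1)
  rw [sum_range_succ, h, extendByZero_val] at this
  omega

theorem nonneg_of_sum_range_row_eq_zero (hA : IsASM A) {i j : Fin n}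
    (h : ∑ c ∈ range j, extendByZero (A i) c = 0) : 0 ≤ A i j := by
  have := (hA.signsAlternate_row i).extendByZero.sum_range_nonneg
    (extendByZero_eq_neg_one_or_zero_or_one (hA.1 i))
    ((sum_range_extendByZero (A i)).trans (hA.2.1 i)) (Nat.succ_le_of_lt j.isLt)
  rw [sum_range_succ, h, extendByZero_val] at this
  omega

end

section

variable {m k : ℕ} {A : Matrix (Fin (m + k)) (Fin (m + k)) ℤ}

theorem topRight_eq_zero (hA : IsASM A)
    (hrow : ∀ i : Fin m, ∑ b : Fin m, A (Fin.castAdd k i) (Fin.castAdd k b) = 1)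
    (i : Fin m) (j : Fin k) : A (Fin.castAdd k i) (Fin.natAdd m j) = 0 := by
  induction hs : (i : ℕ) + j using Nat.strong_induction_on generalizing i j with
  | _ s ih =>
  have hcol : ∑ c ∈ range i, extendByZero (Aᵀ (Fin.natAdd m j)) c = 0 :=
    sum_eq_zero fun c hc => by
      have hci : c < m := (mem_range.mp hc).trans i.isLt
      exact (extendByZero_val _ (Fin.castAdd k ⟨c, hci⟩)).trans
        (ih (c + j) (by have := mem_range.mp hc; omega) ⟨c, hci⟩ j rfl)
  have hrow' : ∑ c ∈ range (Fin.natAdd m j), extendByZero (A (Fin.castAdd k i)) c = 1 := by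
    rw [Fin.val_natAdd, sum_range_add, sum_range_extendByZero_castAdd, hrow i, add_eq_left]
    refine sum_eq_zero fun c hc => ?_
    have hcj : c < k := (mem_range.mp hc).trans j.isLt
    exact (extendByZero_val _ (Fin.natAdd m ⟨c, hcj⟩)).trans
      (ih (i + c) (by have := mem_range.mp hc; omega) i ⟨c, hcj⟩ rfl)
  exact le_antisymm (hA.nonpos_of_sum_range_row_eq_one hrow')
    (hA.transpose.nonneg_of_sum_range_row_eq_zero hcol)

theorem submatrix_natAdd (hA : IsASM A)
    (h₁₂ : ∀ i j, A (Fin.castAdd k i) (Fin.natAdd m j) = 0)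
    (h₂₁ : ∀ i j, A (Fin.natAdd m i) (Fin.castAdd k j) = 0) :
    IsASM (A.submatrix (Fin.natAdd m) (Fin.natAdd m)) := by
  refine ⟨fun i j => hA.1 _ _, fun i => ?_, fun j => ?_,
    fun i => (hA.signsAlternate_row _).comp_natAdd,
    fun j => (hA.transpose.signsAlternate_row _).comp_natAdd⟩
  · simpa [Fin.sum_univ_add, h₂₁] using hA.2.1 (Fin.natAdd m i)
  · simpa [Fin.sum_univ_add, h₁₂] using hA.2.2.1 (Fin.natAdd m j)

end

end IsASM

theorem eq_directSum_submatrix {m k : ℕ} {A : Matrix (Fin (m + k)) (Fin (m + k)) ℤ}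
    (h₁₂ : ∀ i j, A (Fin.castAdd k i) (Fin.natAdd m j) = 0)
    (h₂₁ : ∀ i j, A (Fin.natAdd m i) (Fin.castAdd k j) = 0) :
    A = directSum (A.submatrix (Fin.castAdd k) (Fin.castAdd k))
      (A.submatrix (Fin.natAdd m) (Fin.natAdd m)) := by
  ext i j
  induction i using Fin.addCases <;> induction j using Fin.addCases <;> simp [directSum, h₁₂, h₂₁]

/-- If an ASM `A'` sits as the top-left block of an ASM `A`, then
`A = A' ⊕ B` for some ASM `B`. -/
theorem asm_topLeft_block_is_directSum {m k : ℕ}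
    (A : Matrix (Fin (m + k)) (Fin (m + k)) ℤ) (A' : Matrix (Fin m) (Fin m) ℤ)
    (hA : IsASM A) (hA' : IsASM A')
    (hblock : ∀ i j : Fin m, A (Fin.castAdd k i) (Fin.castAdd k j) = A' i j) :
    ∃ B : Matrix (Fin k) (Fin k) ℤ, IsASM B ∧ A = directSum A' B := by
  have h₁₂ : ∀ i j, A (Fin.castAdd k i) (Fin.natAdd m j) = 0 :=
    hA.topRight_eq_zero fun i => by simpa only [hblock] using hA'.2.1 i
  have h₂₁ : ∀ i j, A (Fin.natAdd m i) (Fin.castAdd k j) = 0 := fun i j =>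
    hA.transpose.topRight_eq_zero
      (fun j => by simpa only [Matrix.transpose_apply, hblock] using hA'.2.2.1 j) j i
  refine ⟨_, hA.submatrix_natAdd h₁₂ h₂₁, ?_⟩
  rw [← show A.submatrix (Fin.castAdd k) (Fin.castAdd k) = A' from Matrix.ext hblock]
  exact eq_directSum_submatrix h₁₂ h₂₁
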